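/- arXiv:2404.12483 — 3 statements merged into one kernel-verified Lean document; each statement's English description precedes it below -/
import Mathlib

section
/- Let 0 < I_1 ≤ I_2 ≤ ... ≤ I_K be reals, set I_0 = 0, and let λ_1,...,λ_K ∈ ℝ. Then Σ_{i=1}^{K} (I_i − I_{i−1})·(Σ_{k=i}^{K} λ_k/√I_k)² = Σ_{i=1}^{K} Σ_{j=1}^{K} λ_i·λ_j·√(I_{min{i,j}}/I_{max{i,j}}). -/
/-!
Put `a k = λ k / √(I k)`. Expanding the square, the left-hand side is
`∑_i (I i - I (i-1)) ∑_{k,l ≥ i} a k a l`; exchanging the order of summation, the coefficient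
of `a k a l` telescopes to `I (min k l)`, and `I (min k l) / (√(I k) √(I l)) = √(I_min / I_max)`.
-/

open Finset

theorem Finset.sum_Icc_one_sub_pred {M : Type*} [AddCommGroup M] (f : ℕ → M) (n : ℕ) :
    ∑ i ∈ Icc 1 n, (f i - f (i - 1)) = f n - f 0 := by
  induction n with
  | zero => simp
  | succ n ih =>
    rw [sum_Icc_succ_top (by omega), ih, Nat.add_sub_cancel]
    abel

section Indicator

variable {M : Type*} [AddCommMonoid M] (g : ℕ → M) {K : ℕ}

theorem Finset.sum_Icc_eq_sum_Icc_one_ite_le {i : ℕ} (hi : 1 ≤ i) :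
    ∑ k ∈ Icc i K, g k = ∑ k ∈ Icc 1 K, if i ≤ k then g k else 0 := by
  rw [← sum_filter]
  congr 1
  ext k
  simp only [mem_Icc, mem_filter]
  omega

theorem Finset.sum_Icc_one_ite_le_eq_sum_Icc {m : ℕ} (hm : m ≤ K) :
    ∑ i ∈ Icc 1 K, (if i ≤ m then g i else 0) = ∑ i ∈ Icc 1 m, g i := by
  rw [← sum_filter]
  congr 1
  ext i
  simp only [mem_Icc, mem_filter]
  omega

end Indicator

theorem Finset.sum_Icc_sub_pred_mul_sq_sum_Icc {R : Type*} [CommRing R] (f a : ℕ → R) (K : ℕ) :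
    ∑ i ∈ Icc 1 K, (f i - f (i - 1)) * (∑ k ∈ Icc i K, a k) ^ 2
      = ∑ k ∈ Icc 1 K, ∑ l ∈ Icc 1 K, (f (min k l) - f 0) * (a k * a l) := by
  calc ∑ i ∈ Icc 1 K, (f i - f (i - 1)) * (∑ k ∈ Icc i K, a k) ^ 2
      = ∑ i ∈ Icc 1 K, ∑ k ∈ Icc 1 K, ∑ l ∈ Icc 1 K,
          if i ≤ min k l then (f i - f (i - 1)) * (a k * a l) else 0 := by
        refine sum_congr rfl fun i hi => ?_
        rw [sum_Icc_eq_sum_Icc_one_ite_le a (mem_Icc.mp hi).1, sq, sum_mul_sum, mul_sum]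
        refine sum_congr rfl fun k _ => ?_
        rw [mul_sum]
        refine sum_congr rfl fun l _ => ?_
        simp only [le_min_iff, ite_and]
        split_ifs <;> ring
    _ = ∑ k ∈ Icc 1 K, ∑ l ∈ Icc 1 K, ∑ i ∈ Icc 1 K,
          if i ≤ min k l then (f i - f (i - 1)) * (a k * a l) else 0 := by
        rw [sum_comm]
        exact sum_congr rfl fun _ _ => sum_comm
    _ = ∑ k ∈ Icc 1 K, ∑ l ∈ Icc 1 K, (f (min k l) - f 0) * (a k * a l) := by
        refine sum_congr rfl fun k hk => sum_congr rfl fun l _ => ?_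
        have hmin : min k l ≤ K := (min_le_left k l).trans (mem_Icc.mp hk).2
        rw [sum_Icc_one_ite_le_eq_sum_Icc (fun i => (f i - f (i - 1)) * (a k * a l)) hmin,
          ← sum_mul, sum_Icc_one_sub_pred]

theorem Real.mul_div_sqrt_mul_div_sqrt {x y : ℝ} (hx : 0 < x) (hy : 0 < y) (a b : ℝ) :
    x * (a / √x * (b / √y)) = a * b * √(x / y) := by
  have hsx : √x ≠ 0 := Real.sqrt_ne_zero'.mpr hx
  have hsy : √y ≠ 0 := Real.sqrt_ne_zero'.mpr hy
  rw [Real.sqrt_div hx.le]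
  nth_rewrite 1 [← Real.mul_self_sqrt hx.le]
  field_simp

theorem quadratic_form_of_group_sequential_covariance_general
    (K : ℕ) (I : ℕ → ℝ) (lam : ℕ → ℝ)
    (hI0 : I 0 = 0)
    (hIpos : ∀ k, 1 ≤ k → k ≤ K → 0 < I k) :
    ∑ i ∈ Finset.Icc 1 K,
        (I i - I (i - 1)) * (∑ k ∈ Finset.Icc i K, lam k / Real.sqrt (I k)) ^ 2
      = ∑ i ∈ Finset.Icc 1 K, ∑ j ∈ Finset.Icc 1 K,
          lam i * lam j * Real.sqrt (I (min i j) / I (max i j)) := by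
  rw [sum_Icc_sub_pred_mul_sq_sum_Icc]
  refine sum_congr rfl fun k hk => sum_congr rfl fun l hl => ?_
  obtain ⟨hk1, hkK⟩ := mem_Icc.mp hk
  obtain ⟨hl1, hlK⟩ := mem_Icc.mp hl
  rw [hI0, sub_zero]
  rcases le_total k l with hkl | hlk
  · rw [min_eq_left hkl, max_eq_right hkl]
    exact Real.mul_div_sqrt_mul_div_sqrt (hIpos k hk1 hkK) (hIpos l hl1 hlK) _ _
  · rw [min_eq_right hlk, max_eq_left hlk, mul_comm (lam k / _), mul_comm (lam k)]
    exact Real.mul_div_sqrt_mul_div_sqrt (hIpos l hl1 hlK) (hIpos k hk1 hkK) _ _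

/-- For nondecreasing positive information levels
`0 < I 1 ≤ ... ≤ I K` with the convention `I 0 = 0` and any reals `λ_1, ..., λ_K`:
`∑_{i=1}^K (I_i − I_{i−1}) (∑_{k=i}^K λ_k/√I_k)²
  = ∑_{i=1}^K ∑_{j=1}^K λ_i λ_j √(I_{min{i,j}}/I_{max{i,j}})`. -/
theorem quadratic_form_of_group_sequential_covariance
    (K : ℕ) (I : ℕ → ℝ) (lam : ℕ → ℝ)
    (hI0 : I 0 = 0)
    (hIpos : ∀ k, 1 ≤ k → k ≤ K → 0 < I k)
    (hmono : ∀ i j, 1 ≤ i → i ≤ j → j ≤ K → I i ≤ I j) :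
    ∑ i ∈ Finset.Icc 1 K,
        (I i - I (i - 1)) * (∑ k ∈ Finset.Icc i K, lam k / Real.sqrt (I k)) ^ 2
      = ∑ i ∈ Finset.Icc 1 K, ∑ j ∈ Finset.Icc 1 K,
          lam i * lam j * Real.sqrt (I (min i j) / I (max i j)) :=
  quadratic_form_of_group_sequential_covariance_general K I lam hI0 hIpos
end

section
/- Let N = m + n with m, n ≥ 1 and N ≥ 2, let z_1,...,z_N ∈ ℝ with grand mean z̄ = (1/N)·Σ_{i=1}^{N} z_i, and let τ be a uniformly distributed random permutation of {1,...,N}. Then the variance over τ of D = (1/m)·Σ_{i=1}^{m} z_{τ(i)} − (1/n)·Σ_{i=m+1}^{N} z_{τ(i)} equals (N/(m·n·(N−1)))·Σ_{i=1}^{N} (z_i − z̄)². -/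
/-!
Write `D τ = ∑ i, w i * z (τ i)` with weights `w = 1/m` on the treatment arm and `-1/n` on the
control arm. Since `∑ w = 0`, the mean of `D` over `τ` vanishes and `z` may be replaced by its
centred version. The second moments `∑_τ z (τ i) * z (τ j)` take one value on the diagonal and
one off it, because permutations act 2-transitively; centring makes every row of this matrix sum
to zero, which ties the two values together. Hence the variance of `D` is
`(∑ w²) (∑ (z - z̄)²) / (N - 1)`, and `∑ w² = 1/m + 1/n = N/(m n)`.
-/

open Finset

/-- The permuted two-sample mean difference: the first `m` permuted values form the
treatment arm, the remaining `n` the control arm. -/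
noncomputable def permMeanDiff (m n : ℕ) (z : Fin (m + n) → ℝ)
    (τ : Equiv.Perm (Fin (m + n))) : ℝ :=
  (∑ i ∈ Finset.univ.filter (fun i : Fin (m + n) => (i : ℕ) < m), z (τ i)) / (m : ℝ)
    - (∑ i ∈ Finset.univ.filter (fun i : Fin (m + n) => m ≤ (i : ℕ)), z (τ i)) / (n : ℝ)

open Equiv

namespace Equiv.Perm

theorem exists_apply_eq_and_apply_eq {α : Type*} [DecidableEq α] {i j k l : α} (hij : i ≠ j)
    (hkl : k ≠ l) : ∃ c : Perm α, c i = k ∧ c j = l := by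
  refine ⟨(swap i k).trans (swap (swap i k j) l), ?_, by simp⟩
  have hk : k ≠ swap i k j := by
    simpa only [swap_apply_left] using (swap i k).injective.ne hij
  simp only [trans_apply, swap_apply_left]
  exact swap_apply_of_ne_of_ne hk hkl

variable {α β : Type*} [Fintype α] [DecidableEq α] [AddCommMonoid β]

theorem sum_comp_apply_eq (g : α → β) (i j : α) :
    ∑ σ : Perm α, g (σ i) = ∑ σ : Perm α, g (σ j) :=
  calc ∑ σ : Perm α, g (σ i)
      = ∑ σ : Perm α, g ((σ * swap j i) i) :=
        (Equiv.sum_comp (Equiv.mulRight (swap j i)) fun σ => g (σ i)).symm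
    _ = ∑ σ : Perm α, g (σ j) := by simp [mul_apply]

theorem sum_comp_apply_apply_eq (g : α → α → β) {i j k l : α} (hij : i ≠ j) (hkl : k ≠ l) :
    ∑ σ : Perm α, g (σ i) (σ j) = ∑ σ : Perm α, g (σ k) (σ l) := by
  obtain ⟨c, hck, hcl⟩ := exists_apply_eq_and_apply_eq hkl hij
  calc ∑ σ : Perm α, g (σ i) (σ j)
      = ∑ σ : Perm α, g ((σ * c) k) ((σ * c) l) := by simp [mul_apply, hck, hcl]
    _ = ∑ σ : Perm α, g (σ k) (σ l) :=
        Equiv.sum_comp (Equiv.mulRight c) fun σ => g (σ k) (σ l)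

theorem card_smul_sum_comp_apply (g : α → β) (i : α) :
    Fintype.card α • ∑ σ : Perm α, g (σ i) = Fintype.card (Perm α) • ∑ k, g k :=
  calc Fintype.card α • ∑ σ : Perm α, g (σ i)
      = ∑ j : α, ∑ σ : Perm α, g (σ j) := by simp [sum_comp_apply_eq g _ i]
    _ = ∑ σ : Perm α, ∑ j, g (σ j) := Finset.sum_comm
    _ = Fintype.card (Perm α) • ∑ k, g k := by simp [Equiv.sum_comp]

theorem sum_sum_mul_apply_eq_zero {c : α → ℝ} (hc : ∑ i, c i = 0) (z : α → ℝ) :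
    ∑ σ : Perm α, ∑ i, c i * z (σ i) = 0 := by
  rcases isEmpty_or_nonempty α with _ | ⟨⟨i₀⟩⟩
  · simp
  calc ∑ σ : Perm α, ∑ i, c i * z (σ i)
      = ∑ i, c i * ∑ σ : Perm α, z (σ i₀) := by
        rw [Finset.sum_comm]
        simp [← Finset.mul_sum, sum_comp_apply_eq z _ i₀]
    _ = 0 := by rw [← Finset.sum_mul, hc, zero_mul]

theorem card_sub_one_mul_sum_sq_sum_mul_apply_of_sum_eq_zero (hα : 1 < Fintype.card α)
    {c z : α → ℝ} (hc : ∑ i, c i = 0) (hz : ∑ k, z k = 0) :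
    ((Fintype.card α : ℝ) - 1) * ∑ σ : Perm α, (∑ i, c i * z (σ i)) ^ 2
      = Fintype.card (Perm α) * (∑ i, c i ^ 2) * ∑ k, z k ^ 2 := by
  obtain ⟨i₀, i₁, h₀₁⟩ := Fintype.exists_pair_of_one_lt_card hα
  set P : α → α → ℝ := fun i j => ∑ σ : Perm α, z (σ i) * z (σ j)
  set d := P i₀ i₀
  set o := P i₀ i₁
  have hP : ∀ i j, P i j = (d - o) * (if i = j then 1 else 0) + o := by
    intro i j
    by_cases hij : i = j
    · subst hij
      simp [d, P, sum_comp_apply_eq (fun k => z k * z k) i i₀]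
    · simp [hij, o, P, sum_comp_apply_apply_eq (fun k l => z k * z l) hij h₀₁]
  have hrow : ∑ j, P i₀ j = 0 := by
    simp only [P]
    rw [Finset.sum_comm]
    simp [← Finset.mul_sum, Equiv.sum_comp _ z, hz]
  have hrow' : d + ((Fintype.card α : ℝ) - 1) * o = 0 := by
    simp only [hP, mul_ite, mul_one, mul_zero, sum_add_distrib, sum_ite_eq, mem_univ,
      ↓reduceIte, sum_const, card_univ, nsmul_eq_mul] at hrow
    linear_combination hrow
  have hdiag : (Fintype.card α : ℝ) * d = Fintype.card (Perm α) * ∑ k, z k ^ 2 := by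
    have h := card_smul_sum_comp_apply (fun k => z k ^ 2) i₀
    simp only [nsmul_eq_mul] at h
    simpa only [d, P, sq] using h
  have hexpand : ∑ σ : Perm α, (∑ i, c i * z (σ i)) ^ 2 = (d - o) * ∑ i, c i ^ 2 :=
    calc ∑ σ : Perm α, (∑ i, c i * z (σ i)) ^ 2
        = ∑ σ : Perm α, ∑ i, ∑ j, c i * c j * (z (σ i) * z (σ j)) := by
          refine Finset.sum_congr rfl fun σ _ => ?_
          rw [sq, Finset.sum_mul_sum]
          exact Finset.sum_congr rfl fun i _ => Finset.sum_congr rfl fun j _ => by ring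
      _ = ∑ i, ∑ j, c i * c j * P i j := by
          simp only [P, Finset.mul_sum]
          rw [Finset.sum_comm]
          exact Finset.sum_congr rfl fun i _ => Finset.sum_comm
      _ = (d - o) * ∑ i, c i ^ 2 := by
          simp only [hP, mul_ite, mul_one, mul_zero, mul_add, sum_add_distrib, sum_ite_eq,
            mem_univ, ↓reduceIte, ← sum_mul, ← mul_sum, hc, zero_mul, add_zero, ← sq]
          exact mul_comm _ _
  rw [hexpand]
  linear_combination (∑ i, c i ^ 2) * (hdiag - hrow')

theorem card_sub_one_mul_sum_sq_sum_mul_apply (hα : 1 < Fintype.card α) {c : α → ℝ}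
    (hc : ∑ i, c i = 0) (z : α → ℝ) :
    ((Fintype.card α : ℝ) - 1) * ∑ σ : Perm α, (∑ i, c i * z (σ i)) ^ 2
      = Fintype.card (Perm α) * (∑ i, c i ^ 2)
          * ∑ k, (z k - (∑ k', z k') / Fintype.card α) ^ 2 := by
  set zbar := (∑ k', z k') / Fintype.card α
  have hcentre : ∀ σ : Perm α, ∑ i, c i * z (σ i) = ∑ i, c i * (z (σ i) - zbar) := fun σ => by
    simp only [mul_sub, Finset.sum_sub_distrib, ← Finset.sum_mul, hc, zero_mul, sub_zero]
  have hz : ∑ k, (z k - zbar) = 0 := by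
    have hα₀ : (Fintype.card α : ℝ) ≠ 0 := by positivity
    rw [Finset.sum_sub_distrib, Finset.sum_const, Finset.card_univ, nsmul_eq_mul,
      mul_div_cancel₀ _ hα₀, sub_self]
  calc ((Fintype.card α : ℝ) - 1) * ∑ σ : Perm α, (∑ i, c i * z (σ i)) ^ 2
      = ((Fintype.card α : ℝ) - 1) * ∑ σ : Perm α, (∑ i, c i * (z (σ i) - zbar)) ^ 2 := by
        simp only [hcentre]
    _ = _ := card_sub_one_mul_sum_sq_sum_mul_apply_of_sum_eq_zero hα hc hz

end Equiv.Perm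

noncomputable def meanDiffWeight (m n : ℕ) (i : Fin (m + n)) : ℝ :=
  if (i : ℕ) < m then (m : ℝ)⁻¹ else -(n : ℝ)⁻¹

theorem permMeanDiff_eq_sum_mul (m n : ℕ) (z : Fin (m + n) → ℝ) (τ : Perm (Fin (m + n))) :
    permMeanDiff m n z τ = ∑ i, meanDiffWeight m n i * z (τ i) := by
  simp only [permMeanDiff, meanDiffWeight, Finset.sum_filter, Finset.sum_div,
    ← Finset.sum_sub_distrib]
  refine Finset.sum_congr rfl fun i _ => ?_
  rcases lt_or_ge (i : ℕ) m with h | h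
  · simp [h, h.not_ge, div_eq_inv_mul]
  · simp [h, h.not_gt, div_eq_inv_mul]

theorem sum_meanDiffWeight {m n : ℕ} (hm : m ≠ 0) (hn : n ≠ 0) :
    ∑ i, meanDiffWeight m n i = 0 := by
  simp [Fin.sum_univ_add, meanDiffWeight, hm, hn]

theorem sum_meanDiffWeight_sq (m n : ℕ) :
    ∑ i, meanDiffWeight m n i ^ 2 = (m : ℝ)⁻¹ + (n : ℝ)⁻¹ := by
  simp only [meanDiffWeight, ite_pow, inv_pow, even_two, Even.neg_pow, Fin.sum_univ_add,
    Fin.val_castAdd, Fin.is_lt, ↓reduceIte, sum_const, card_univ, Fintype.card_fin, nsmul_eq_mul,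
    Fin.val_natAdd, add_lt_iff_neg_left, not_lt_zero]
  field_simp

theorem variance_of_permuted_mean_difference_general
    (m n : ℕ) (hm : 1 ≤ m) (hn : 1 ≤ n) (z : Fin (m + n) → ℝ) :
    (∑ τ : Equiv.Perm (Fin (m + n)),
          (permMeanDiff m n z τ
            - (∑ τ' : Equiv.Perm (Fin (m + n)), permMeanDiff m n z τ')
                / (Fintype.card (Equiv.Perm (Fin (m + n))) : ℝ)) ^ 2)
        / (Fintype.card (Equiv.Perm (Fin (m + n))) : ℝ)
      = (((m + n : ℕ) : ℝ) / ((m : ℝ) * (n : ℝ) * (((m + n : ℕ) : ℝ) - 1)))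
          * ∑ i, (z i - (∑ i', z i') / ((m + n : ℕ) : ℝ)) ^ 2 := by
  have hc := sum_meanDiffWeight (m := m) (n := n) (by omega) (by omega)
  have hvar := Perm.card_sub_one_mul_sum_sq_sum_mul_apply (by rw [Fintype.card_fin]; omega) hc z
  rw [sum_meanDiffWeight_sq, Fintype.card_fin] at hvar
  simp only [permMeanDiff_eq_sum_mul, Perm.sum_sum_mul_apply_eq_zero hc, zero_div, sub_zero]
  have hN₁ : ((m + n : ℕ) : ℝ) - 1 ≠ 0 := by
    rw [sub_ne_zero]
    exact_mod_cast (show m + n ≠ 1 by omega)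
  have hperm : (Fintype.card (Perm (Fin (m + n))) : ℝ) ≠ 0 := by positivity
  rw [div_eq_iff hperm, ← mul_right_inj' hN₁, hvar]
  generalize ∑ i, (z i - (∑ i', z i') / ((m + n : ℕ) : ℝ)) ^ 2 = S
  push_cast at hN₁ ⊢
  field_simp
  ring

/-- For a fixed pooled sample `z : Fin (m+n) → ℝ` with grand mean `z̄`
and a uniformly distributed random permutation `τ` of the `N = m + n ≥ 2` indices, the
variance over `τ` of the permuted two-sample mean difference `D` equals
`(N/(m n (N−1))) ∑_i (z_i − z̄)²`. -/
theorem variance_of_permuted_mean_difference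
    (m n : ℕ) (hm : 1 ≤ m) (hn : 1 ≤ n) (hN : 2 ≤ m + n) (z : Fin (m + n) → ℝ) :
    (∑ τ : Equiv.Perm (Fin (m + n)),
          (permMeanDiff m n z τ
            - (∑ τ' : Equiv.Perm (Fin (m + n)), permMeanDiff m n z τ')
                / (Fintype.card (Equiv.Perm (Fin (m + n))) : ℝ)) ^ 2)
        / (Fintype.card (Equiv.Perm (Fin (m + n))) : ℝ)
      = (((m + n : ℕ) : ℝ) / ((m : ℝ) * (n : ℝ) * (((m + n : ℕ) : ℝ) - 1)))
          * ∑ i, (z i - (∑ i', z i') / ((m + n : ℕ) : ℝ)) ^ 2 :=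
  variance_of_permuted_mean_difference_general m n hm hn z
end

section
/- Let (S_n) be a sequence of real-valued random variables, c ∈ ℝ a constant, and (c_n) a sequence of real-valued random variables on the same probability spaces with c_n → c in probability. Suppose that for every ε > 0 there exists δ > 0 such that limsup_n P(c − δ ≤ S_n ≤ c + δ) ≤ ε. Then P(𝟙{S_n ≥ c_n} ≠ 𝟙{S_n ≥ c}) → 0 as n → ∞; in particular E|𝟙{S_n ≥ c_n} − 𝟙{S_n ≥ c}| → 0. -/
open MeasureTheory Filter Topology
open scoped ENNReal

/-!
The two indicators can differ only when `S n` lies between `cn n` and `c`. So either `cn n` is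
at distance at least `δ` from `c`, an event whose probability tends to `0`, or `S n` lies in
`[c - δ, c + δ]`, an event whose probability has `limsup` at most `ε` for a suitable `δ`. Hence the
`limsup` of the probability of disagreement is at most every `ε > 0`.
-/

theorem ENNReal.tendsto_zero_of_forall_limsup_le_ofReal {ι : Type*} {l : Filter ι}
    {u : ι → ℝ≥0∞} (h : ∀ ε : ℝ, 0 < ε → limsup u l ≤ ENNReal.ofReal ε) :
    Tendsto u l (𝓝 0) :=
  tendsto_of_le_liminf_of_limsup_le bot_le <|
    ENNReal.le_of_forall_pos_le_add fun ε hε _ => by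
      simpa using h ε (NNReal.coe_pos.mpr hε)

theorem abs_sub_le_of_not_le_iff_le {a c s : ℝ} (h : ¬(a ≤ s ↔ c ≤ s)) :
    |s - c| ≤ |a - c| := by
  have hbetween : (a ≤ s ∧ s < c) ∨ (c ≤ s ∧ s < a) := by
    by_cases ha : a ≤ s <;> by_cases hc : c ≤ s <;> simp_all
  rcases hbetween with ⟨ha, hc⟩ | ⟨hc, ha⟩
  · rw [abs_of_neg (sub_neg.mpr hc), abs_of_neg (by linarith)]
    linarith
  · rw [abs_of_nonneg (sub_nonneg.mpr hc), abs_of_pos (by linarith)]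
    linarith

theorem setOf_not_le_iff_le_subset {Ω : Type*} (f g : Ω → ℝ) (c δ : ℝ) :
    {ω | ¬(f ω ≤ g ω ↔ c ≤ g ω)} ⊆
      {ω | δ ≤ dist (f ω) c} ∪ {ω | c - δ ≤ g ω ∧ g ω ≤ c + δ} := by
  intro ω hω
  rcases le_or_gt δ (dist (f ω) c) with hfar | hnear
  · exact Or.inl hfar
  · rw [Real.dist_eq] at hnear
    have hg := abs_le.mp ((abs_sub_le_of_not_le_iff_le hω).trans hnear.le)
    exact Or.inr ⟨by linarith [hg.1], by linarith [hg.2]⟩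

section

variable {Ω : Type*} [MeasurableSpace Ω]

theorem MeasureTheory.limsup_measure_le_of_subset_union {ι : Type*} {l : Filter ι}
    {μ : Measure Ω} {B A N : ι → Set Ω} (hsub : ∀ i, B i ⊆ A i ∪ N i)
    (hA : Tendsto (fun i => μ (A i)) l (𝓝 0)) :
    limsup (fun i => μ (B i)) l ≤ limsup (fun i => μ (N i)) l :=
  calc limsup (fun i => μ (B i)) l
      ≤ limsup ((fun i => μ (A i)) + fun i => μ (N i)) l :=
        limsup_le_limsup (.of_forall fun i =>
          (measure_mono (hsub i)).trans (measure_union_le _ _))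
    _ = limsup (fun i => μ (N i)) l := ENNReal.limsup_add_of_left_tendsto_zero hA _

theorem MeasureTheory.integral_abs_ite_sub_ite_le (μ : Measure Ω) [IsFiniteMeasure μ]
    (p q : Ω → Prop) [DecidablePred p] [DecidablePred q] :
    ∫ ω, |(if p ω then (1 : ℝ) else 0) - (if q ω then (1 : ℝ) else 0)| ∂μ
      ≤ μ.real {ω | ¬(p ω ↔ q ω)} := by
  set D := {ω | ¬(p ω ↔ q ω)}
  -- `D` need not be measurable, so we dominate by the indicator of a measurable hull.
  have hle : ∀ ω, |(if p ω then (1 : ℝ) else 0) - (if q ω then (1 : ℝ) else 0)|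
      ≤ (toMeasurable μ D).indicator 1 ω := by
    intro ω
    refine le_trans ?_ (Set.indicator_le_indicator_of_subset (subset_toMeasurable μ D)
      (fun _ => zero_le_one) ω)
    by_cases hp : p ω <;> by_cases hq : q ω <;> simp [D, hp, hq]
  calc ∫ ω, |(if p ω then (1 : ℝ) else 0) - (if q ω then (1 : ℝ) else 0)| ∂μ
      ≤ ∫ ω, (toMeasurable μ D).indicator 1 ω ∂μ :=
        integral_mono_of_nonneg (.of_forall fun _ => abs_nonneg _)
          ((integrable_const 1).indicator (measurableSet_toMeasurable μ D)) (.of_forall hle)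
    _ = μ.real D := by
        rw [integral_indicator_one (measurableSet_toMeasurable μ D), measureReal_def,
          measureReal_def, measure_toMeasurable]

end

theorem indicator_of_data_dependent_critical_value_general
    {Ω : Type*} [MeasurableSpace Ω] (P : Measure Ω) [IsProbabilityMeasure P]
    (S : ℕ → Ω → ℝ) (cn : ℕ → Ω → ℝ) (c : ℝ)
    (hconv : TendstoInMeasure P cn atTop (fun _ => c))
    (hanti : ∀ ε : ℝ, 0 < ε → ∃ δ : ℝ, 0 < δ ∧
      limsup (fun n => P {ω | c - δ ≤ S n ω ∧ S n ω ≤ c + δ}) atTop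
        ≤ ENNReal.ofReal ε) :
    Tendsto (fun n => P {ω | ¬ ((cn n ω ≤ S n ω) ↔ (c ≤ S n ω))}) atTop (nhds 0)
    ∧ Tendsto
        (fun n => ∫ ω, |(if cn n ω ≤ S n ω then (1 : ℝ) else 0)
          - (if c ≤ S n ω then (1 : ℝ) else 0)| ∂P)
        atTop (nhds 0) := by
  have hflip : Tendsto (fun n => P {ω | ¬ ((cn n ω ≤ S n ω) ↔ (c ≤ S n ω))}) atTop (𝓝 0) := by
    refine ENNReal.tendsto_zero_of_forall_limsup_le_ofReal fun ε hε => ?_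
    obtain ⟨δ, hδ, hnear⟩ := hanti ε hε
    exact (limsup_measure_le_of_subset_union
      (fun n => setOf_not_le_iff_le_subset (cn n) (S n) c δ)
      (tendstoInMeasure_iff_dist.mp hconv δ hδ)).trans hnear
  refine ⟨hflip, squeeze_zero (fun n => integral_nonneg fun ω => abs_nonneg _)
    (fun n => integral_abs_ite_sub_ite_le P _ _) ?_⟩
  simp only [measureReal_def]
  exact (ENNReal.tendsto_toReal ENNReal.zero_ne_top).comp hflip

/-- If test statistics `S n` are compared against data-dependent
critical values `cn n` converging in probability to a deterministic critical value `c`,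
and `S n` puts asymptotically small mass near `c` (for every `ε > 0` there is `δ > 0`
with `limsup_n P(c − δ ≤ S_n ≤ c + δ) ≤ ε`), then
`P(𝟙{S_n ≥ c_n} ≠ 𝟙{S_n ≥ c}) → 0` and `E|𝟙{S_n ≥ c_n} − 𝟙{S_n ≥ c}| → 0`. -/
theorem indicator_of_data_dependent_critical_value
    {Ω : Type*} [MeasurableSpace Ω] (P : Measure Ω) [IsProbabilityMeasure P]
    (S : ℕ → Ω → ℝ) (cn : ℕ → Ω → ℝ) (c : ℝ)
    (hS : ∀ n, Measurable (S n)) (hcn : ∀ n, Measurable (cn n))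
    (hconv : TendstoInMeasure P cn atTop (fun _ => c))
    (hanti : ∀ ε : ℝ, 0 < ε → ∃ δ : ℝ, 0 < δ ∧
      limsup (fun n => P {ω | c - δ ≤ S n ω ∧ S n ω ≤ c + δ}) atTop
        ≤ ENNReal.ofReal ε) :
    Tendsto (fun n => P {ω | ¬ ((cn n ω ≤ S n ω) ↔ (c ≤ S n ω))}) atTop (nhds 0)
    ∧ Tendsto
        (fun n => ∫ ω, |(if cn n ω ≤ S n ω then (1 : ℝ) else 0)
          - (if c ≤ S n ω then (1 : ℝ) else 0)| ∂P)
        atTop (nhds 0) :=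
  indicator_of_data_dependent_critical_value_general P S cn c hconv hanti
end
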